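/- In StraTT, generalized displaceability holds: if Δ; Γ ⊢ a :^k A, then Δ; Γ^{+j} ⊢ a^{+j} :^{j+k} A^{+j}, where Γ^{+j} increments the level of every context assumption and displaces the types of assumptions: (Γ, x :^k A)^{+j} = Γ^{+j}, x :^{k+j} A^{+j}. -/
import Mathlib


/-! Syntax of StraTT: a single universe ⋆, variables, displaced constants,
stratified dependent function types `Πx:^j A. B`, floating nondependent
function types `A → B`, abstractions, applications, the empty type and its
eliminator. Levels are natural numbers. -/

inductive Tm : Type
  | star
  | var (x : ℕ)
  | const (x : ℕ) (i : ℕ)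
  | pi (j : ℕ) (x : ℕ) (A B : Tm)
  | arrow (A B : Tm)
  | lam (x : ℕ) (b : Tm)
  | app (b a : Tm)
  | bot
  | absurd (b : Tm)
  deriving DecidableEq

namespace Tm

/-- Substitution `a{u/x}` of the term `u` for the variable `x`. -/
def subst (x : ℕ) (u : Tm) : Tm → Tm
  | star => star
  | var y => if y = x then u else var y
  | const y i => const y i
  | pi j y A B => pi j y (subst x u A) (if y = x then B else subst x u B)
  | arrow A B => arrow (subst x u A) (subst x u B)
  | lam y b => lam y (if y = x then b else subst x u b)
  | app b a => app (subst x u b) (subst x u a)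
  | bot => bot
  | absurd b => absurd (subst x u b)

/-- Displacement `a^{+i}`: uniformly increment every level annotation by `i`. -/
def incr (i : ℕ) : Tm → Tm
  | star => star
  | var y => var y
  | const y j => const y (i + j)
  | pi j y A B => pi (i + j) y (incr i A) (incr i B)
  | arrow A B => arrow (incr i A) (incr i B)
  | lam y b => lam y (incr i b)
  | app b a => app (incr i b) (incr i a)
  | bot => bot
  | absurd b => absurd (incr i b)

end Tm

/-- A signature entry `x :^k A := a` (name, level, type, definition). -/
abbrev Sig := List (ℕ × ℕ × Tm × Tm)
/-- A context entry `x :^k A` (name, level, type); head is the most recent. -/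
abbrev Ctx := List (ℕ × ℕ × Tm)

def lookupSig : Sig → ℕ → Option (ℕ × Tm × Tm)
  | [], _ => none
  | (y, k, A, a) :: Δ, x => if x = y then some (k, A, a) else lookupSig Δ x

def lookupCtx : Ctx → ℕ → Option (ℕ × Tm)
  | [], _ => none
  | (y, k, A) :: Γ, x => if x = y then some (k, A) else lookupCtx Γ x

/-- Untyped definitional equality `Δ ⊢ a ≡ b`. -/
inductive DEq (Δ : Sig) : Tm → Tm → Prop
  | refl (a) : DEq Δ a a
  | sym : DEq Δ a b → DEq Δ b a
  | trans : DEq Δ a b → DEq Δ b c → DEq Δ a c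
  | beta (x b a) : DEq Δ (.app (.lam x b) a) (Tm.subst x a b)
  | delta {x i k A a} : lookupSig Δ x = some (k, A, a) → DEq Δ (.const x i) (Tm.incr i a)
  | pi {j x A A' B B'} : DEq Δ A A' → DEq Δ B B' → DEq Δ (.pi j x A B) (.pi j x A' B')
  | arrow {A A' B B'} : DEq Δ A A' → DEq Δ B B' → DEq Δ (.arrow A B) (.arrow A' B')
  | lam {x b b'} : DEq Δ b b' → DEq Δ (.lam x b) (.lam x b')
  | app {b b' a a'} : DEq Δ b b' → DEq Δ a a' → DEq Δ (.app b a) (.app b' a')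
  | absurd {b b'} : DEq Δ b b' → DEq Δ (.absurd b) (.absurd b')

mutual
  /-- Well-formed signatures `⊢ Δ`. -/
  inductive SigWf : Sig → Prop
    | nil : SigWf []
    | cons {Δ x k A a} : SigWf Δ → lookupSig Δ x = none →
        Typing Δ [] a k A → SigWf ((x, k, A, a) :: Δ)

  /-- Well-formed contexts `Δ ⊢ Γ`. -/
  inductive CtxWf : Sig → Ctx → Prop
    | nil {Δ} : SigWf Δ → CtxWf Δ []
    | cons {Δ Γ x k A} : CtxWf Δ Γ → lookupCtx Γ x = none →
        Typing Δ Γ A k .star → CtxWf Δ ((x, k, A) :: Γ)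

  /-- Level-annotated typing `Δ; Γ ⊢ a :^k A` of full StraTT. -/
  inductive Typing : Sig → Ctx → Tm → ℕ → Tm → Prop
    | star {Δ Γ k} : CtxWf Δ Γ → Typing Δ Γ .star k .star
    | var {Δ Γ x j k A} : CtxWf Δ Γ → lookupCtx Γ x = some (j, A) → j ≤ k →
        Typing Δ Γ (.var x) k A
    | const {Δ Γ x i j k A a} : CtxWf Δ Γ → lookupSig Δ x = some (j, A, a) →
        i + j ≤ k → Typing Δ Γ (.const x i) k (Tm.incr i A)
    | pi {Δ Γ j k x A B} : j < k → Typing Δ Γ A j .star →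
        Typing Δ ((x, j, A) :: Γ) B k .star → Typing Δ Γ (.pi j x A B) k .star
    | lamPi {Δ Γ j k x A B b} : j < k → Typing Δ Γ A j .star →
        Typing Δ ((x, j, A) :: Γ) b k B → Typing Δ Γ (.lam x b) k (.pi j x A B)
    | appPi {Δ Γ j k x A B b a} : Typing Δ Γ b k (.pi j x A B) → Typing Δ Γ a j A →
        Typing Δ Γ (.app b a) k (Tm.subst x a B)
    | arrow {Δ Γ k A B} : Typing Δ Γ A k .star → Typing Δ Γ B k .star →
        Typing Δ Γ (.arrow A B) k .star
    | lamArrow {Δ Γ k x A B b} : Typing Δ Γ A k .star → Typing Δ Γ B k .star →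
        Typing Δ ((x, k, A) :: Γ) b k B → Typing Δ Γ (.lam x b) k (.arrow A B)
    | appArrow {Δ Γ k A B b a} : Typing Δ Γ b k (.arrow A B) → Typing Δ Γ a k A →
        Typing Δ Γ (.app b a) k B
    | bot {Δ Γ k} : CtxWf Δ Γ → Typing Δ Γ .bot k .star
    | absurd {Δ Γ k b A} : Typing Δ Γ b k .bot → Typing Δ Γ A k .star →
        Typing Δ Γ (.absurd b) k A
    | conv {Δ Γ k a A B} : Typing Δ Γ a k A → DEq Δ A B →
        Typing Δ Γ B k .star → Typing Δ Γ a k B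
end

/-- Displacement of a context: `(Γ, x :^k A)^{+j} = Γ^{+j}, x :^{k+j} A^{+j}`. -/
def ctxIncr (j : ℕ) (Γ : Ctx) : Ctx :=
  Γ.map (fun e => (e.1, e.2.1 + j, Tm.incr j e.2.2))

theorem Tm.incr_incr (j i : ℕ) (a : Tm) :
    Tm.incr j (Tm.incr i a) = Tm.incr (j + i) a := by
  induction a <;> simp [Tm.incr, *] <;> omega

theorem Tm.incr_subst (j : ℕ) (x : ℕ) (u : Tm) (b : Tm) :
    Tm.incr j (Tm.subst x u b) = Tm.subst x (Tm.incr j u) (Tm.incr j b) := by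
  induction b <;> simp [Tm.incr, Tm.subst, *] <;> split <;> simp [Tm.incr, *]

theorem lookupCtx_incr {Γ : Ctx} {x k A} (j : ℕ)
    (h : lookupCtx Γ x = some (k, A)) :
    lookupCtx (ctxIncr j Γ) x = some (k + j, Tm.incr j A) := by
  induction Γ with
  | nil => simp [lookupCtx] at h
  | cons e Γ ih =>
    obtain ⟨y, k', A'⟩ := e
    simp only [lookupCtx, ctxIncr, List.map] at h ⊢
    split at h
    · simp_all [lookupCtx]
    · simp_all [lookupCtx, ctxIncr]

theorem lookupCtx_incr_none {Γ : Ctx} {x} (j : ℕ)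
    (h : lookupCtx Γ x = none) :
    lookupCtx (ctxIncr j Γ) x = none := by
  induction Γ with
  | nil => simp [lookupCtx, ctxIncr]
  | cons e Γ ih =>
    obtain ⟨y, k', A'⟩ := e
    simp only [lookupCtx, ctxIncr, List.map] at h ⊢
    split at h
    · exact absurd h (by simp)
    · simp_all [lookupCtx, ctxIncr]

theorem ctxIncr_cons (j x k : ℕ) (A : Tm) (Γ : Ctx) :
    ctxIncr j ((x, k, A) :: Γ) = (x, k + j, Tm.incr j A) :: ctxIncr j Γ := rfl

theorem DEq.incr {Δ : Sig} {a b : Tm} (j : ℕ) (h : DEq Δ a b) :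
    DEq Δ (Tm.incr j a) (Tm.incr j b) := by
  induction h with
  | refl => exact .refl _
  | sym _ ih => exact ih.sym
  | trans _ _ ih1 ih2 => exact ih1.trans ih2
  | beta x b a => simpa [Tm.incr, Tm.incr_subst] using DEq.beta x (Tm.incr j b) (Tm.incr j a)
  | delta h => simpa [Tm.incr, Tm.incr_incr] using DEq.delta (i := j + _) h
  | pi _ _ ih1 ih2 => exact .pi ih1 ih2
  | arrow _ _ ih1 ih2 => exact .arrow ih1 ih2
  | lam _ ih => exact .lam ih
  | app _ _ ih1 ih2 => exact .app ih1 ih2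
  | absurd _ ih => exact .absurd ih

/-- **Generalized displaceability (StraTT)**: if `Δ; Γ ⊢ a :^k A` then
`Δ; Γ^{+j} ⊢ a^{+j} :^{j+k} A^{+j}`. -/
theorem stratt_displaceability {Δ : Sig} {Γ : Ctx} {a A : Tm} {k : ℕ}
    (h : Typing Δ Γ a k A) (j : ℕ) :
    Typing Δ (ctxIncr j Γ) (Tm.incr j a) (j + k) (Tm.incr j A) := by
  refine Typing.rec (motive_1 := fun _ _ => True)
    (motive_2 := fun Δ Γ _ => CtxWf Δ (ctxIncr j Γ))
    (motive_3 := fun Δ Γ a k A _ =>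
      Typing Δ (ctxIncr j Γ) (Tm.incr j a) (j + k) (Tm.incr j A))
    ?_ ?_ ?_ ?_ ?_ ?_ ?_ ?_ ?_ ?_ ?_ ?_ ?_ ?_ ?_ ?_ h
  · trivial
  · intros; trivial
  · intro Δ hs _
    exact .nil hs
  · intro Δ Γ x k A hΓ hl hA ihΓ ihA
    rw [ctxIncr_cons]
    exact .cons ihΓ (lookupCtx_incr_none j hl) (by rw [Nat.add_comm k j]; exact ihA)
  · intro Δ Γ k _ ih
    exact .star ih
  · intro Δ Γ x j' k A _ hl hjk ih
    exact .var ih (lookupCtx_incr j hl) (by omega)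
  · intro Δ Γ x i j' k A a _ hl hle ih
    simpa [Tm.incr, Tm.incr_incr] using
      Typing.const (i := j + i) ih hl (by omega)
  · intro Δ Γ j' k x A B hjk _ _ ihA ihB
    rw [ctxIncr_cons, Nat.add_comm j' j] at ihB
    exact Typing.pi (by omega) ihA ihB
  · intro Δ Γ j' k x A B b hjk _ _ ihA ihb
    rw [ctxIncr_cons, Nat.add_comm j' j] at ihb
    exact Typing.lamPi (by omega) ihA ihb
  · intro Δ Γ j' k x A B b a _ _ ihb iha
    simpa [Tm.incr, Tm.incr_subst] using Typing.appPi (j := j + j') ihb iha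
  · intro Δ Γ k A B _ _ ihA ihB
    exact .arrow ihA ihB
  · intro Δ Γ k x A B b _ _ _ ihA ihB ihb
    rw [ctxIncr_cons, Nat.add_comm k j] at ihb
    exact Typing.lamArrow ihA ihB ihb
  · intro Δ Γ k A B b a _ _ ihb iha
    exact .appArrow ihb iha
  · intro Δ Γ k _ ih
    exact .bot ih
  · intro Δ Γ k b A _ _ ihb ihA
    exact .absurd ihb ihA
  · intro Δ Γ k a A B _ hde _ iha ihB
    exact .conv iha (hde.incr j) ihB
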